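/- arXiv:2408.05080 — 2 statements merged into one kernel-verified Lean document; each statement's English description precedes it below -/
import Mathlib

section
/- Consider a 3-coloring of the vertices of the subdivided triangular lattice: subdivide an equilateral triangle with 3-colored vertices (all colors distinct) into a² smaller triangles by lines parallel to the sides. If a ≡ 1 (mod 3), then there exists exactly one proper 3-coloring of the subdivision vertices (in which every small triangle has vertices of three distinct colors and adjacent small triangles are mirror-symmetric in coloring) extending the coloring of the three corner vertices. -/
/-- If `a ≡ 1 (mod 3)`, the subdivision of an equilateral triangle into `a²` small
triangles has a unique proper 3-coloring of its vertices extending the coloring of the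
corners: the corners get three distinct colors, and every vertex coloring for which each
small (upward and downward) triangle has three distinct colors and which matches the
canonical corner colors equals the canonical coloring `(i, j) ↦ i + 2j (mod 3)`. -/
theorem stmt_14 (a : ℕ) (ha : a % 3 = 1) :
    (((0 : ZMod 3) ≠ (a : ZMod 3)) ∧ ((a : ZMod 3) ≠ (2 * a : ZMod 3)) ∧
      ((0 : ZMod 3) ≠ (2 * a : ZMod 3))) ∧
    ((∀ i j : ℕ, i + j + 1 ≤ a →
        ((i + 2 * j : ZMod 3) ≠ ((i + 1) + 2 * j : ZMod 3) ∧
         ((i + 1) + 2 * j : ZMod 3) ≠ (i + 2 * (j + 1) : ZMod 3) ∧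
         (i + 2 * j : ZMod 3) ≠ (i + 2 * (j + 1) : ZMod 3))) ∧
      (∀ g : ℕ → ℕ → ZMod 3,
        g 0 0 = 0 → g a 0 = (a : ZMod 3) → g 0 a = (2 * a : ZMod 3) →
        (∀ i j : ℕ, i + j + 1 ≤ a →
          (g i j ≠ g (i + 1) j ∧ g (i + 1) j ≠ g i (j + 1) ∧ g i j ≠ g i (j + 1))) →
        (∀ i j : ℕ, i + j + 2 ≤ a →
          (g (i + 1) j ≠ g i (j + 1) ∧ g i (j + 1) ≠ g (i + 1) (j + 1) ∧
            g (i + 1) j ≠ g (i + 1) (j + 1))) →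
        ∀ i j : ℕ, i + j ≤ a → g i j = (i + 2 * j : ZMod 3))) := by
  have hzero : (3 : ZMod 3) = 0 := by decide
  have haz : (a : ZMod 3) = 1 := by
    have h : a = 3 * (a / 3) + 1 := by omega
    rw [h]; push_cast; rw [hzero]; ring
  have h10 : (1 : ZMod 3) ≠ 0 := by decide
  have h20 : (2 : ZMod 3) ≠ 0 := by decide
  refine ⟨⟨?_, ?_, ?_⟩, ?_, ?_⟩
  · rw [haz]; decide
  · rw [haz]; decide
  · rw [haz]; decide
  · intro i j _
    refine ⟨?_, ?_, ?_⟩ <;> intro hE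
    · exact h10 (by linear_combination -hE)
    · exact h10 (by linear_combination -hE)
    · exact h20 (by linear_combination -hE)
  · intro g hg00 hga0 hg0a hup hdown
    have tri : ∀ x y z : ZMod 3, x ≠ y → y ≠ z → x ≠ z → x + y + z = 0 := by decide
    have U : ∀ i j : ℕ, i + j + 1 ≤ a → g i j + g (i + 1) j + g i (j + 1) = 0 := by
      intro i j h
      exact tri _ _ _ (hup i j h).1 (hup i j h).2.1 (hup i j h).2.2
    have D : ∀ i j : ℕ, i + j + 2 ≤ a →
        g (i + 1) j + g i (j + 1) + g (i + 1) (j + 1) = 0 := by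
      intro i j h
      exact tri _ _ _ (hdown i j h).1 (hdown i j h).2.1 (hdown i j h).2.2
    -- the horizontal difference in column 0/1 is constant along j
    have hcol : ∀ j : ℕ, j + 1 ≤ a → g 1 j - g 0 j = g 1 0 - g 0 0 := by
      intro j
      induction j with
      | zero => intro _; rfl
      | succ k ih =>
        intro hk
        have ihk := ih (by omega)
        have hU := U 0 k (by omega)
        have hD := D 0 k (by omega)
        linear_combination hD - 2 * hU + ihk + (g 0 k) * hzero
    -- values along column 0
    have col0 : ∀ j : ℕ, j ≤ a → g 0 j = -(j : ZMod 3) * g 1 0 := by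
      intro j
      induction j with
      | zero => intro _; simpa using hg00
      | succ k ih =>
        intro hk
        have ihk := ih (by omega)
        have hU := U 0 k (by omega)
        simp only [zero_add] at hU
        have hc := hcol k (by omega)
        push_cast
        linear_combination hU - hc - 2 * ihk + hg00 + ((k : ZMod 3) * g 1 0) * hzero
    have hg10 : g 1 0 = 1 := by
      have h1 := col0 a le_rfl
      rw [hg0a, haz] at h1
      linear_combination h1 - hzero
    -- horizontal differences along row 0 are constant
    have hrow : ∀ i : ℕ, i + 1 ≤ a → g (i + 1) 0 - g i 0 = g 1 0 - g 0 0 := by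
      intro i
      induction i with
      | zero => intro _; rfl
      | succ k ih =>
        intro hk
        have ihk := ih (by omega)
        have hU1 := U k 0 (by omega)
        have hU2 := U (k + 1) 0 (by omega)
        have hD := D k 0 (by omega)
        simp only [zero_add] at hU1 hU2 hD
        linear_combination hU1 + hU2 - hD + ihk - (g (k + 1) 0) * hzero
    -- values along row 0
    have row0 : ∀ i : ℕ, i ≤ a → g i 0 = (i : ZMod 3) := by
      intro i
      induction i with
      | zero => intro _; simpa using hg00
      | succ k ih =>
        intro hk
        have ihk := ih (by omega)
        have hr := hrow k (by omega)
        push_cast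
        linear_combination hr + ihk + hg10 - hg00
    have main : ∀ j i : ℕ, i + j ≤ a → g i j = (i : ZMod 3) + 2 * (j : ZMod 3) := by
      intro j
      induction j with
      | zero =>
        intro i hi
        have := row0 i (by omega)
        push_cast
        linear_combination this
      | succ k ih =>
        intro i hi
        have h1 := ih i (by omega)
        have h2 := ih (i + 1) (by omega)
        have hU := U i k (by omega)
        push_cast at h2 ⊢
        linear_combination hU - h1 - h2 - ((i : ZMod 3) + 2 * (k : ZMod 3) + 1) * hzero
    intro i j hij
    exact main j i hij
end

section
/- In the free group F2 = ⟨x, y⟩, for each r ≥ 1 the number of subgroups of index exactly r is N_r where N_1 = 1 and N_r = r·(r!) − ∑_{k=1}^{r−1} ((r−k)!)·N_k; in particular N_r ≥ 1 for all r ≥ 1, so F2 has subgroups of every finite index. -/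
/-!
A homomorphism `F₂ → S_r` is a pair of permutations, so there are `(r!)²` of them. Splitting such
a representation along the orbit `S ∋ 0` of the base point writes it uniquely as a transitive
representation on `S` together with an arbitrary one on the complement, so
`(r!)² = ∑ₖ C(r-1, k-1) · t_k · ((r-k)!)²`, where `t_k` counts transitive representations on `k`
points. A transitive representation with a base point is the same as its stabiliser `K`, a
subgroup of index `k`, together with a bijection `G ⧸ K ≃ Fin k`; hence `k · t_k = N_k · k!`.
Substituting and dividing by `(r-1)!` gives Hall's recursion, and `N_r ≥ 1` because rotating `r`
points cyclically is a transitive representation.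
-/

open Equiv Finset

/-- The number of subgroups of the free group on two generators of index exactly `r`. -/
noncomputable def numSubgroupsOfIndex (r : ℕ) : ℕ :=
  Nat.card {K : Subgroup (FreeGroup (Fin 2)) // K.index = r}

abbrev TransitiveRep (G α : Type*) [Group G] :=
  {φ : G →* Perm α // ∀ x y : α, ∃ g : G, φ g x = y}

section TransitiveRep

variable {G : Type*} [Group G] {α β : Type*}

def TransitiveRep.congr (e : α ≃ β) : TransitiveRep G α ≃ TransitiveRep G β :=
  e.permCongrHom.monoidHomCongrRightEquiv.subtypeEquiv fun φ => by
    simp only [MulEquiv.monoidHomCongrRightEquiv_apply, MonoidHom.coe_comp,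
      MulEquiv.coe_toMonoidHom, Function.comp_apply, permCongrHom_coe, permCongr_apply]
    refine ⟨fun h x y => ?_, fun h x y => ?_⟩
    · obtain ⟨g, hg⟩ := h (e.symm x) (e.symm y)
      exact ⟨g, by rw [hg, apply_symm_apply]⟩
    · obtain ⟨g, hg⟩ := h (e x) (e y)
      exact ⟨g, by simpa using hg⟩

def pointStabilizer (φ : G →* Perm α) (a : α) : Subgroup G :=
  (MulAction.stabilizer (Perm α) a).comap φ

@[simp]
lemma mem_pointStabilizer {φ : G →* Perm α} {a : α} {g : G} :
    g ∈ pointStabilizer φ a ↔ φ g a = a :=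
  Iff.rfl

lemma apply_eq_apply_iff_mem_pointStabilizer (φ : G →* Perm α) (a : α) (g h : G) :
    φ g a = φ h a ↔ g⁻¹ * h ∈ pointStabilizer φ a := by
  rw [mem_pointStabilizer, map_mul, Perm.mul_apply, map_inv, Perm.inv_eq_iff_eq, eq_comm]

def orbitMap (φ : G →* Perm α) (a : α) : G ⧸ pointStabilizer φ a → α :=
  Quotient.lift (fun g => φ g a) fun g h hgh =>
    (apply_eq_apply_iff_mem_pointStabilizer φ a g h).2 (QuotientGroup.leftRel_apply.1 hgh)

noncomputable def TransitiveRep.quotientEquiv (φ : TransitiveRep G α) (a : α) :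
    G ⧸ pointStabilizer φ.1 a ≃ α :=
  Equiv.ofBijective (orbitMap φ.1 a)
    ⟨by
      rintro ⟨g⟩ ⟨h⟩ hgh
      exact QuotientGroup.eq.2 ((apply_eq_apply_iff_mem_pointStabilizer φ.1 a g h).1 hgh),
    fun x => (φ.2 a x).imp' QuotientGroup.mk fun _ hg => hg⟩

@[simp]
lemma TransitiveRep.quotientEquiv_mk (φ : TransitiveRep G α) (a : α) (g : G) :
    φ.quotientEquiv a g = φ.1 g a :=
  rfl

def TransitiveRep.ofQuotient (K : Subgroup G) (e : G ⧸ K ≃ α) : TransitiveRep G α :=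
  ⟨e.permCongrHom.toMonoidHom.comp (MulAction.toPermHom G (G ⧸ K)), fun x y =>
    (MulAction.exists_smul_eq G (e.symm x) (e.symm y)).imp fun g hg => by simp [hg]⟩

@[simp]
lemma TransitiveRep.ofQuotient_apply (K : Subgroup G) (e : G ⧸ K ≃ α) (g : G) (x : α) :
    (ofQuotient K e).1 g x = e (g • e.symm x) :=
  rfl

lemma pointStabilizer_ofQuotient (K : Subgroup G) (e : G ⧸ K ≃ α) :
    pointStabilizer (TransitiveRep.ofQuotient K e).1 (e (1 : G)) = K := by
  ext g
  rw [mem_pointStabilizer, TransitiveRep.ofQuotient_apply, symm_apply_apply, e.apply_eq_iff_eq,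
    ← MulAction.mem_stabilizer_iff, MulAction.stabilizer_quotient]

noncomputable def pointStabilizerFiberEquiv (K : Subgroup G) :
    {p : TransitiveRep G α × α // pointStabilizer p.1.1 p.2 = K} ≃ (G ⧸ K ≃ α) where
  toFun p := (Subgroup.quotientEquivOfEq p.2.symm).trans (p.1.1.quotientEquiv p.1.2)
  invFun e := ⟨(.ofQuotient K e, e (1 : G)), pointStabilizer_ofQuotient K e⟩
  left_inv := by
    rintro ⟨⟨φ, a⟩, rfl⟩
    refine Subtype.ext (Prod.ext (Subtype.ext (MonoidHom.ext fun g => Equiv.ext fun x => ?_)) ?_)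
    · obtain ⟨h, rfl⟩ := φ.2 a x
      have hsymm : ((Subgroup.quotientEquivOfEq rfl).trans (φ.quotientEquiv a)).symm (φ.1 h a)
          = (h : G ⧸ pointStabilizer φ.1 a) := by
        rw [symm_apply_eq]; rfl
      rw [TransitiveRep.ofQuotient_apply, hsymm, MulAction.Quotient.smul_mk, smul_eq_mul]
      simp [Subgroup.quotientEquivOfEq_mk]
    · simp [Subgroup.quotientEquivOfEq_mk]
  right_inv e := by
    ext x
    induction x using QuotientGroup.induction_on
    simp [Subgroup.quotientEquivOfEq_mk]

theorem card_sigma_quotientEquiv [Finite α] [Nonempty α] :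
    Nat.card (Σ K : Subgroup G, G ⧸ K ≃ α) =
      Nat.card {K : Subgroup G // K.index = Nat.card α} * (Nat.card α).factorial := by
  have hequiv (K : {K : Subgroup G // K.index = Nat.card α}) : Nonempty (G ⧸ K.1 ≃ α) := by
    have : Finite (G ⧸ K.1) := Nat.finite_of_card_ne_zero (K.2.trans_ne Finite.card_pos.ne')
    exact Finite.card_eq.1 K.2
  calc Nat.card (Σ K : Subgroup G, G ⧸ K ≃ α)
      = Nat.card (Σ K : {K : Subgroup G // K.index = Nat.card α}, G ⧸ K.1 ≃ α) :=
        (Nat.card_congr (sigmaSubtypeEquivOfSubset _ _ fun K e => Nat.card_congr e)).symm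
    _ = Nat.card ({K : Subgroup G // K.index = Nat.card α} × Perm α) :=
        Nat.card_congr ((sigmaCongrRight fun K => (hequiv K).some.equivCongr (.refl α)).trans
          (sigmaEquivProd _ _))
    _ = _ := by rw [Nat.card_prod, Nat.card_perm]

theorem card_transitiveRep_mul_card [Finite α] [Nonempty α] :
    Nat.card (TransitiveRep G α) * Nat.card α =
      Nat.card {K : Subgroup G // K.index = Nat.card α} * (Nat.card α).factorial := by
  rw [← Nat.card_prod, ← card_sigma_quotientEquiv]
  exact Nat.card_congr <| (sigmaFiberEquiv fun p : TransitiveRep G α × α =>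
    pointStabilizer p.1.1 p.2).symm.trans (sigmaCongrRight pointStabilizerFiberEquiv)

theorem card_transitiveRep_fin_succ (n : ℕ) :
    Nat.card (TransitiveRep G (Fin (n + 1))) =
      Nat.card {K : Subgroup G // K.index = n + 1} * n.factorial := by
  have h := card_transitiveRep_mul_card (G := G) (α := Fin (n + 1))
  rw [Nat.card_fin, Nat.factorial_succ, mul_left_comm, mul_comm] at h
  exact Nat.eq_of_mul_eq_mul_left n.succ_pos h

end TransitiveRep

theorem Finset.sum_filter_mem_apply_card {α M : Type*} [Fintype α] [DecidableEq α]
    [AddCommMonoid M] (a : α) (f : ℕ → M) :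
    ∑ S : Finset α with a ∈ S, f #S =
      ∑ m ∈ range (Fintype.card α), (Fintype.card α - 1).choose m • f (m + 1) := by
  calc ∑ S : Finset α with a ∈ S, f #S = ∑ T ∈ (univ.erase a).powerset, f (#T + 1) := by
        refine sum_nbij' (·.erase a) (insert a) ?_ ?_ ?_ ?_ ?_
        · simp [subset_erase]
        · simp
        · intro S hS
          exact insert_erase (mem_filter.1 hS).2
        · intro T hT
          exact erase_insert fun haT => by simpa using mem_powerset.1 hT haT
        · intro S hS
          rw [card_erase_add_one (mem_filter.1 hS).2]
    _ = _ := by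
        rw [sum_powerset_apply_card (fun k => f (k + 1)), card_erase_of_mem (mem_univ a),
          card_univ, Nat.sub_add_cancel (Fintype.card_pos_iff.2 ⟨a⟩)]

section OrbitDecomposition

variable {G : Type*} [Group G] {α : Type*}

def MonoidHom.subtypePerm (φ : G →* Perm α) (p : α → Prop) (hp : ∀ g x, p (φ g x) ↔ p x) :
    G →* Perm {x // p x} where
  toFun g := (φ g).subtypePerm (hp g)
  map_one' := by ext; simp
  map_mul' g h := by ext; simp only [map_mul]; rfl

@[simp]
lemma MonoidHom.subtypePerm_apply (φ : G →* Perm α) (p : α → Prop)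
    (hp : ∀ g x, p (φ g x) ↔ p x) (g : G) (x : {x // p x}) :
    (φ.subtypePerm p hp g x : α) = φ g x :=
  rfl

variable [Fintype α]

open scoped Classical in
noncomputable def orbitFinset (φ : G →* Perm α) (a : α) : Finset α :=
  {x | ∃ g, φ g a = x}

@[simp]
lemma mem_orbitFinset {φ : G →* Perm α} {a x : α} : x ∈ orbitFinset φ a ↔ ∃ g, φ g a = x := by
  simp [orbitFinset]

lemma apply_mem_iff_of_orbitFinset_eq {φ : G →* Perm α} {a : α} {S : Finset α}
    (hS : orbitFinset φ a = S) (g : G) (x : α) : φ g x ∈ S ↔ x ∈ S := by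
  subst hS
  simp only [mem_orbitFinset]
  refine ⟨fun ⟨h, hh⟩ => ⟨g⁻¹ * h, ?_⟩, fun ⟨h, hh⟩ => ⟨g * h, ?_⟩⟩
  · rw [map_mul, Perm.mul_apply, hh, map_inv, Perm.inv_def, symm_apply_apply]
  · rw [map_mul, Perm.mul_apply, hh]

lemma exists_apply_eq_of_orbitFinset_eq {φ : G →* Perm α} {a : α} {S : Finset α}
    (hS : orbitFinset φ a = S) {x y : α} (hx : x ∈ S) (hy : y ∈ S) : ∃ g, φ g x = y := by
  subst hS
  obtain ⟨h, rfl⟩ := mem_orbitFinset.1 hx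
  obtain ⟨h', rfl⟩ := mem_orbitFinset.1 hy
  exact ⟨h' * h⁻¹, by rw [← Perm.mul_apply, ← map_mul, inv_mul_cancel_right]⟩

variable [DecidableEq α]

noncomputable def orbitFiberEquiv (a : α) {S : Finset α} (ha : a ∈ S) :
    {φ : G →* Perm α // orbitFinset φ a = S} ≃
      TransitiveRep G S × (G →* Perm {x // x ∉ S}) where
  toFun φ :=
    (⟨φ.1.subtypePerm (· ∈ S) (apply_mem_iff_of_orbitFinset_eq φ.2), fun x y =>
        (exists_apply_eq_of_orbitFinset_eq φ.2 x.2 y.2).imp fun _ hg => Subtype.ext hg⟩,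
      φ.1.subtypePerm (· ∉ S) fun g x => not_congr (apply_mem_iff_of_orbitFinset_eq φ.2 g x))
  invFun ψχ := ⟨(Perm.subtypeCongrHom (· ∈ S)).comp (ψχ.1.1.prod ψχ.2), by
    ext x
    simp only [mem_orbitFinset, MonoidHom.comp_apply, MonoidHom.prod_apply,
      Perm.subtypeCongrHom_apply, Perm.subtypeCongr.left_apply _ _ ha]
    refine ⟨fun ⟨g, hg⟩ => hg ▸ (ψχ.1.1 g ⟨a, ha⟩).2, fun hx => ?_⟩
    obtain ⟨g, hg⟩ := ψχ.1.2 ⟨a, ha⟩ ⟨x, hx⟩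
    exact ⟨g, by rw [hg]⟩⟩
  left_inv φ := by
    refine Subtype.ext (MonoidHom.ext fun g => Equiv.ext fun x => ?_)
    by_cases hx : x ∈ S <;> simp [Perm.subtypeCongr.left_apply, Perm.subtypeCongr.right_apply, hx]
  right_inv ψχ := by
    refine Prod.ext (Subtype.ext (MonoidHom.ext fun g => Equiv.ext fun x => ?_))
      (MonoidHom.ext fun g => Equiv.ext fun x => ?_) <;>
      apply Subtype.ext <;>
      simp [Perm.subtypeCongr.left_apply, Perm.subtypeCongr.right_apply, x.2]

theorem card_orbitFiber (a : α) {S : Finset α} (ha : a ∈ S) :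
    Nat.card {φ : G →* Perm α // orbitFinset φ a = S} =
      Nat.card (TransitiveRep G (Fin #S)) *
        Nat.card (G →* Perm (Fin (Fintype.card α - #S))) := by
  have e : {x // x ∉ S} ≃ Fin (Fintype.card α - #S) :=
    Fintype.equivFinOfCardEq (by rw [Fintype.card_subtype_compl, Fintype.card_coe])
  rw [Nat.card_congr (orbitFiberEquiv a ha), Nat.card_prod,
    Nat.card_congr (TransitiveRep.congr S.equivFin),
    Nat.card_congr e.permCongrHom.monoidHomCongrRightEquiv]

theorem card_monoidHom_perm [Finite (G →* Perm α)] (a : α) :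
    Nat.card (G →* Perm α) = ∑ m ∈ range (Fintype.card α), (Fintype.card α - 1).choose m *
      (Nat.card (TransitiveRep G (Fin (m + 1))) *
        Nat.card (G →* Perm (Fin (Fintype.card α - (m + 1))))) := by
  have ha (S : Finset α) (hS : Nat.card {φ : G →* Perm α // orbitFinset φ a = S} ≠ 0) : a ∈ S := by
    obtain ⟨⟨φ, rfl⟩⟩ := (Nat.card_ne_zero.1 hS).1
    exact mem_orbitFinset.2 ⟨1, by simp⟩
  rw [Nat.card_congr (sigmaFiberEquiv fun φ : G →* Perm α => orbitFinset φ a).symm,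
    Nat.card_sigma, ← sum_filter_of_ne fun S _ => ha S]
  simp_rw [← smul_eq_mul ((Fintype.card α - 1).choose _)]
  rw [← sum_filter_mem_apply_card a
    fun k => Nat.card (TransitiveRep G (Fin k)) * Nat.card (G →* Perm (Fin (Fintype.card α - k)))]
  exact sum_congr rfl fun S hS => card_orbitFiber a (mem_filter.1 hS).2

end OrbitDecomposition

section FreeGroup

variable {ι : Type*}

instance FreeGroup.finite_monoidHom [Finite ι] {H : Type*} [Group H] [Finite H] :
    Finite (FreeGroup ι →* H) :=
  .of_equiv _ FreeGroup.lift

theorem FreeGroup.card_monoidHom [Finite ι] {H : Type*} [Group H] :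
    Nat.card (FreeGroup ι →* H) = Nat.card H ^ Nat.card ι := by
  rw [← Nat.card_congr FreeGroup.lift, Nat.card_fun]

open Fin.NatCast in
theorem finRotate_pow_apply (n k : ℕ) (x : Fin (n + 1)) :
    (finRotate (n + 1) ^ k) x = x + (k : Fin (n + 1)) := by
  induction k with
  | zero => simp
  | succ k ih => rw [pow_succ', Perm.mul_apply, ih, finRotate_apply, Nat.cast_succ, add_assoc]

theorem FreeGroup.nonempty_transitiveRep_fin [Nonempty ι] (n : ℕ) :
    Nonempty (TransitiveRep (FreeGroup ι) (Fin (n + 1))) := by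
  obtain ⟨i⟩ := ‹Nonempty ι›
  refine ⟨⟨FreeGroup.lift fun _ => finRotate (n + 1), fun x y =>
    ⟨FreeGroup.of i ^ (y - x).val, ?_⟩⟩⟩
  rw [map_pow, FreeGroup.lift_apply_of, finRotate_pow_apply, Fin.cast_val_eq_self,
    add_sub_cancel]

end FreeGroup

theorem card_transitiveRep_freeGroup_fin_two (n : ℕ) :
    Nat.card (TransitiveRep (FreeGroup (Fin 2)) (Fin (n + 1))) =
      numSubgroupsOfIndex (n + 1) * n.factorial :=
  card_transitiveRep_fin_succ n

theorem hall_recursion_numSubgroupsOfIndex (n : ℕ) :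
    (n + 1) * (n + 1).factorial =
      ∑ m ∈ range (n + 1), (n - m).factorial * numSubgroupsOfIndex (m + 1) := by
  have h := card_monoidHom_perm (G := FreeGroup (Fin 2)) (0 : Fin (n + 1))
  simp only [Fintype.card_fin, add_tsub_cancel_right, Nat.add_sub_add_right,
    FreeGroup.card_monoidHom, Nat.card_perm, Nat.card_fin,
    card_transitiveRep_freeGroup_fin_two] at h
  refine Nat.eq_of_mul_eq_mul_left n.factorial_pos ?_
  calc n.factorial * ((n + 1) * (n + 1).factorial) = (n + 1).factorial ^ 2 := by
        rw [Nat.factorial_succ]; ring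
    _ = _ := h
    _ = _ := by
        rw [mul_sum]
        refine sum_congr rfl fun m hm => ?_
        rw [← Nat.choose_mul_factorial_mul_factorial (Nat.le_of_lt_succ (mem_range.1 hm))]
        ring

theorem one_le_numSubgroupsOfIndex (n : ℕ) : 1 ≤ numSubgroupsOfIndex (n + 1) := by
  have : Nonempty (TransitiveRep (FreeGroup (Fin 2)) (Fin (n + 1))) :=
    FreeGroup.nonempty_transitiveRep_fin n
  have hpos : 0 < numSubgroupsOfIndex (n + 1) * n.factorial :=
    card_transitiveRep_freeGroup_fin_two n ▸ Nat.card_pos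
  exact Nat.pos_of_mul_pos_right hpos

/-- Marshall Hall's recursion for `F₂`: `N₁ = 1`,
`N_r = r·r! − ∑_{k=1}^{r−1} (r−k)!·N_k`, and `N_r ≥ 1` for all `r ≥ 1`, so `F₂` has
subgroups of every finite index. -/
theorem stmt_19 :
    numSubgroupsOfIndex 1 = 1 ∧
    (∀ r : ℕ, 1 ≤ r →
      (numSubgroupsOfIndex r : ℤ) =
        (r : ℤ) * Nat.factorial r -
          ∑ k ∈ Finset.Ico 1 r, ((r - k).factorial : ℤ) * numSubgroupsOfIndex k) ∧
    (∀ r : ℕ, 1 ≤ r → 1 ≤ numSubgroupsOfIndex r) := by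
  refine ⟨by simpa using (hall_recursion_numSubgroupsOfIndex 0).symm, fun r hr => ?_,
    fun r hr => ?_⟩
  · obtain ⟨n, rfl⟩ := Nat.exists_eq_add_of_le' hr
    have hall := hall_recursion_numSubgroupsOfIndex n
    rw [sum_range_succ, Nat.sub_self, Nat.factorial_zero, one_mul] at hall
    have hsum : ∑ k ∈ Ico 1 (n + 1), ((n + 1 - k).factorial : ℤ) * numSubgroupsOfIndex k =
        ∑ m ∈ range n, ((n - m).factorial : ℤ) * numSubgroupsOfIndex (m + 1) := by
      rw [sum_Ico_eq_sum_range, add_tsub_cancel_right]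
      exact sum_congr rfl fun m _ => by rw [add_comm 1 m, Nat.add_sub_add_right]
    rw [hsum, eq_sub_iff_add_eq, add_comm]
    exact_mod_cast hall.symm
  · obtain ⟨n, rfl⟩ := Nat.exists_eq_add_of_le' hr
    exact one_le_numSubgroupsOfIndex n
end
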